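/- (Certifying reality) Let F : ℂⁿ → ℂⁿ be a polynomial system with real coefficients and let I be a strong interval approximate zero with witnesses x ∈ I and Y such that K_{x,Y}(I) ⊆ I and √2‖1ₙ − Y·□JF(I)‖_∞ < 1. If moreover the conjugate set {z̄ : z ∈ K_{x,Y}(I)} ⊆ I, then the unique zero of F in I is real (lies in ℝⁿ). -/

import Mathlib

open Set Pointwise

noncomputable section

/-- Pointwise addition of sets of reals. -/
def sadd (X Y : Set ℝ) : Set ℝ := Set.image2 (· + ·) X Y

/-- Pointwise subtraction of sets of reals. -/
def ssub (X Y : Set ℝ) : Set ℝ := Set.image2 (· - ·) X Y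

/-- Pointwise multiplication of sets of reals. -/
def smul' (X Y : Set ℝ) : Set ℝ := Set.image2 (· * ·) X Y

/-- The rectangular complex interval `X + iY`. -/
def cI (X Y : Set ℝ) : Set ℂ := {z | z.re ∈ X ∧ z.im ∈ Y}

/-- Real parts of a set of complex numbers. -/
def reS (S : Set ℂ) : Set ℝ := Complex.re '' S

/-- Imaginary parts of a set of complex numbers. -/
def imS (S : Set ℂ) : Set ℝ := Complex.im '' S

/-- Complex interval multiplication:
`(X+iY)·(W+iZ) = (X·W − Y·Z) + i(X·Z + Y·W)`. -/
def cmul (S T : Set ℂ) : Set ℂ :=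
  cI (ssub (smul' (reS S) (reS T)) (smul' (imS S) (imS T)))
     (sadd (smul' (reS S) (imS T)) (smul' (imS S) (reS T)))

/-- `S` is a rectangular complex interval. -/
def IsRect (S : Set ℂ) : Prop :=
  ∃ a b c d : ℝ, a ≤ b ∧ c ≤ d ∧ S = cI (Set.Icc a b) (Set.Icc c d)

variable {n : ℕ}

/-- The interval vector `I ∈ 𝕀ℂⁿ` determined by coordinate intervals `IV`. -/
def boxSet (IV : Fin n → Set ℂ) : Set (Fin n → ℂ) := {z | ∀ j, z j ∈ IV j}

/-- `F` is a square polynomial system. -/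
def IsPolyMap (F : (Fin n → ℂ) → Fin n → ℂ) : Prop :=
  ∀ i, ∃ p : MvPolynomial (Fin n) ℂ, ∀ z, F z i = MvPolynomial.eval z p

/-- The Jacobian matrix `JF(z)` of `F` at `z`. -/
def jac (F : (Fin n → ℂ) → Fin n → ℂ) (z : Fin n → ℂ) : Matrix (Fin n) (Fin n) ℂ :=
  fun i j => fderiv ℂ (fun w => F w i) z (Pi.single j 1)

/-- Entries of the interval matrix `1ₙ − Y·□JF(I)`, where `MJ` is the interval
enclosure of the Jacobian on `I`, computed in complex interval arithmetic. -/
def Bmat (Y : Matrix (Fin n) (Fin n) ℂ) (MJ : Fin n → Fin n → Set ℂ) :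
    Fin n → Fin n → Set ℂ :=
  fun i j => ({(if i = j then (1 : ℂ) else 0)} : Set ℂ) - ∑ k, cmul {Y i k} (MJ k j)

/-- Coordinates of the Krawczyk set
`K_{x,Y}(I) = x − Y·□F(x) + (1ₙ − Y·□JF(I))(I − x)`, where `FX` is the interval
enclosure `□F(x)` and `MJ` the interval enclosure `□JF(I)`. -/
def Kset (x : Fin n → ℂ) (Y : Matrix (Fin n) (Fin n) ℂ)
    (FX : Fin n → Set ℂ) (MJ : Fin n → Fin n → Set ℂ) (IV : Fin n → Set ℂ) :
    Fin n → Set ℂ :=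
  fun i => (({x i} : Set ℂ) - ∑ j, cmul {Y i j} (FX j)) +
      ∑ j, cmul ((IV j) - {x j}) (Bmat Y MJ i j)

/-- The `∞`-operator norm of a complex matrix (`Fin n → ℂ` carries the max norm). -/
def opNormInf (M : Matrix (Fin n) (Fin n) ℂ) : ℝ :=
  sSup {r | ∃ v : Fin n → ℂ, ‖v‖ = 1 ∧ r = ‖M.mulVec v‖}

/-- The norm `‖A‖_∞` of an interval matrix: the maximum of the `∞`-operator norms
over all matrices contained in it. -/
def imatNorm (B : Fin n → Fin n → Set ℂ) : ℝ :=
  sSup {r | ∃ M : Matrix (Fin n) (Fin n) ℂ, (∀ i j, M i j ∈ B i j) ∧ r = opNormInf M}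

/-- `F` is a square polynomial system with real coefficients. -/
def IsRealPolyMap (F : (Fin n → ℂ) → Fin n → ℂ) : Prop :=
  ∀ i, ∃ p : MvPolynomial (Fin n) ℝ,
    ∀ z, F z i = MvPolynomial.eval z (MvPolynomial.map (algebraMap ℝ ℂ) p)

/-! Krawczyk's argument, with an integral mean value theorem: for `w, w'` in the box,
`F w' - F w = A (w' - w)` where `A` averages `JF` along the segment, so `A` lies in the closed
convex rectangles `MJ`. A zero `z` in the box then satisfies `z = x - Y F(x) + (1 - Y A)(z - x)`,
hence `z ∈ K`, so `z̄` lies in the box, and `z̄` is again a zero because `F` has real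
coefficients. Finally `A' (z̄ - z) = 0` for some `A' ∈ MJ`, so `z̄ - z` is a fixed point of
`1 - Y A'`, a matrix of norm at most `‖1 - Y·MJ‖ < 1`; thus `z̄ = z`. -/

open Bornology Matrix MeasureTheory

lemma IsRect.isCompact {S : Set ℂ} (hS : IsRect S) : IsCompact S := by
  obtain ⟨a, b, c, d, -, -, rfl⟩ := hS
  exact isCompact_Icc.reProdIm isCompact_Icc

lemma IsRect.convex {S : Set ℂ} (hS : IsRect S) : Convex ℝ S := by
  obtain ⟨a, b, c, d, -, -, rfl⟩ := hS
  exact ((convex_Icc a b).linear_preimage Complex.reLm).inter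
    ((convex_Icc c d).linear_preimage Complex.imLm)

lemma mem_cmul {S T : Set ℂ} {a b : ℂ} (ha : a ∈ S) (hb : b ∈ T) : a * b ∈ cmul S T :=
  ⟨⟨a.re * b.re, ⟨a.re, ⟨a, ha, rfl⟩, b.re, ⟨b, hb, rfl⟩, rfl⟩,
      a.im * b.im, ⟨a.im, ⟨a, ha, rfl⟩, b.im, ⟨b, hb, rfl⟩, rfl⟩, (Complex.mul_re a b).symm⟩,
    ⟨a.re * b.im, ⟨a.re, ⟨a, ha, rfl⟩, b.im, ⟨b, hb, rfl⟩, rfl⟩,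
      a.im * b.re, ⟨a.im, ⟨a, ha, rfl⟩, b.re, ⟨b, hb, rfl⟩, rfl⟩, by simp⟩⟩

lemma Bornology.IsBounded.cmul {S T : Set ℂ} (hS : IsBounded S) (hT : IsBounded T) :
    IsBounded (cmul S T) := by
  have re_im {U : Set ℂ} (hU : IsBounded U) : IsBounded (reS U) ∧ IsBounded (imS U) :=
    ⟨Complex.reCLM.lipschitz.isBounded_image hU, Complex.imCLM.lipschitz.isBounded_image hU⟩
  obtain ⟨hSre, hSim⟩ := re_im hS
  obtain ⟨hTre, hTim⟩ := re_im hT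
  exact IsBounded.reProdIm
    (isBounded_sub (isBounded_mul hSre hTre) (isBounded_mul hSim hTim))
    ((isBounded_mul hSre hTim).add (isBounded_mul hSim hTre))

lemma isBounded_finsetSum {ι : Type*} (s : Finset ι) {S : ι → Set ℂ}
    (hS : ∀ i ∈ s, IsBounded (S i)) : IsBounded (∑ i ∈ s, S i) :=
  Finset.sum_induction S IsBounded (fun _ _ => IsBounded.add) isBounded_singleton hS


lemma isBounded_Bmat (Y : Matrix (Fin n) (Fin n) ℂ) {MJ : Fin n → Fin n → Set ℂ}
    (hMJ : ∀ i j, IsBounded (MJ i j)) (i j : Fin n) : IsBounded (Bmat Y MJ i j) :=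
  isBounded_sub isBounded_singleton
    (isBounded_finsetSum _ fun k _ => IsBounded.cmul isBounded_singleton (hMJ k j))

lemma one_sub_mul_mem_Bmat (Y : Matrix (Fin n) (Fin n) ℂ) {MJ : Fin n → Fin n → Set ℂ}
    {A : Matrix (Fin n) (Fin n) ℂ} (hA : ∀ i j, A i j ∈ MJ i j) (i j : Fin n) :
    (1 - Y * A) i j ∈ Bmat Y MJ i j :=
  Set.sub_mem_sub (Matrix.one_apply (i := i) (j := j))
    (Set.finsetSum_mem_finsetSum _ _ _ fun k _ => mem_cmul rfl (hA k j))

lemma exists_norm_le_of_isBounded {B : Fin n → Fin n → Set ℂ} (hB : ∀ i j, IsBounded (B i j)) :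
    ∃ C, 0 ≤ C ∧ ∀ i j, ∀ m ∈ B i j, ‖m‖ ≤ C := by
  obtain ⟨C, hC, hCB⟩ :=
    (isBounded_iUnion.2 fun i => isBounded_iUnion.2 (hB i)).exists_pos_norm_le
  exact ⟨C, hC.le, fun i j m hm => hCB m (Set.mem_iUnion₂.2 ⟨i, j, hm⟩)⟩

lemma norm_mulVec_le_of_norm_le {M : Matrix (Fin n) (Fin n) ℂ} {C : ℝ} (hC : 0 ≤ C)
    (hM : ∀ i j, ‖M i j‖ ≤ C) {v : Fin n → ℂ} (hv : ‖v‖ ≤ 1) : ‖M *ᵥ v‖ ≤ n * C := by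
  refine (pi_norm_le_iff_of_nonneg (by positivity)).2 fun i => ?_
  calc ‖(M *ᵥ v) i‖ ≤ ∑ j, ‖M i j * v j‖ := norm_sum_le Finset.univ fun j => M i j * v j
    _ ≤ ∑ _j : Fin n, C := Finset.sum_le_sum fun j _ => by
        rw [norm_mul]
        exact (mul_le_mul (hM i j) ((norm_le_pi_norm v j).trans hv) (norm_nonneg _) hC).trans_eq
          (mul_one C)
    _ = n * C := by simp

lemma opNormInf_le_of_norm_le {M : Matrix (Fin n) (Fin n) ℂ} {C : ℝ} (hC : 0 ≤ C)
    (hM : ∀ i j, ‖M i j‖ ≤ C) : opNormInf M ≤ n * C :=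
  Real.sSup_le (by rintro r ⟨v, hv, rfl⟩; exact norm_mulVec_le_of_norm_le hC hM hv.le)
    (by positivity)

lemma one_le_opNormInf_of_mulVec_eq_self {M : Matrix (Fin n) (Fin n) ℂ} {v : Fin n → ℂ}
    (hv : v ≠ 0) (hMv : M *ᵥ v = v) : 1 ≤ opNormInf M := by
  obtain ⟨C, hC, hMC⟩ := exists_norm_le_of_isBounded fun i j => isBounded_singleton (x := M i j)
  have hbdd : BddAbove {r | ∃ v : Fin n → ℂ, ‖v‖ = 1 ∧ r = ‖M *ᵥ v‖} := ⟨n * C, by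
    rintro r ⟨u, hu, rfl⟩
    exact norm_mulVec_le_of_norm_le hC (fun i j => hMC i j _ rfl) hu.le⟩
  have hu : ‖(‖v‖⁻¹ : ℂ) • v‖ = 1 := norm_smul_inv_norm hv
  refine le_csSup hbdd ⟨_, hu, ?_⟩
  rw [mulVec_smul, hMv, hu]

lemma opNormInf_le_imatNorm {B : Fin n → Fin n → Set ℂ} (hB : ∀ i j, IsBounded (B i j))
    {M : Matrix (Fin n) (Fin n) ℂ} (hM : ∀ i j, M i j ∈ B i j) : opNormInf M ≤ imatNorm B := by
  obtain ⟨C, hC, hBC⟩ := exists_norm_le_of_isBounded hB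
  refine le_csSup ⟨n * C, ?_⟩ ⟨M, hM, rfl⟩
  rintro r ⟨M', hM', rfl⟩
  exact opNormInf_le_of_norm_le hC fun i j => hBC i j _ (hM' i j)

lemma eq_zero_of_mulVec_eq_zero_of_imatNorm_Bmat_lt_one {Y : Matrix (Fin n) (Fin n) ℂ}
    {MJ : Fin n → Fin n → Set ℂ} (hMJ : ∀ i j, IsBounded (MJ i j))
    (hnorm : imatNorm (Bmat Y MJ) < 1) {A : Matrix (Fin n) (Fin n) ℂ}
    (hA : ∀ i j, A i j ∈ MJ i j) {v : Fin n → ℂ} (hAv : A *ᵥ v = 0) : v = 0 := by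
  by_contra hv
  have hfix : (1 - Y * A) *ᵥ v = v := by
    rw [sub_mulVec, one_mulVec, ← mulVec_mulVec, hAv, mulVec_zero, sub_zero]
  have := (one_le_opNormInf_of_mulVec_eq_self hv hfix).trans
    (opNormInf_le_imatNorm (isBounded_Bmat Y hMJ) (one_sub_mul_mem_Bmat Y hA))
  exact hnorm.not_ge this

lemma sub_eq_intervalIntegral_fderiv {E G : Type*} [NormedAddCommGroup E] [NormedSpace ℂ E]
    [NormedAddCommGroup G] [NormedSpace ℂ G] [CompleteSpace G] {f : E → G}
    (hf : ContDiff ℂ 1 f) (x w : E) :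
    f w - f x = ∫ t in (0 : ℝ)..1, fderiv ℂ f (x + (t : ℂ) • (w - x)) (w - x) := by
  have hderiv (t : ℝ) : HasDerivAt (fun s : ℝ => f (x + (s : ℂ) • (w - x)))
      (fderiv ℂ f (x + (t : ℂ) • (w - x)) (w - x)) t := by
    have hline : HasDerivAt (fun s : ℝ => x + (s : ℂ) • (w - x)) (w - x) t := by
      simpa using ((Complex.ofRealCLM.hasDerivAt (x := t)).smul_const (w - x)).const_add x
    exact ((hf.differentiable one_ne_zero _).hasFDerivAt.restrictScalars ℝ).comp_hasDerivAt t hline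
  have hcont : Continuous fun t : ℝ => fderiv ℂ f (x + (t : ℂ) • (w - x)) (w - x) :=
    ((hf.continuous_fderiv one_ne_zero).comp (by fun_prop)).clm_apply continuous_const
  rw [intervalIntegral.integral_eq_sub_of_hasDerivAt (fun t _ => hderiv t)
    (hcont.intervalIntegrable 0 1)]
  simp

lemma intervalIntegral_mem_of_convex {E : Type*} [NormedAddCommGroup E] [NormedSpace ℝ E]
    [CompleteSpace E] {s : Set E} (hs : Convex ℝ s) (hsc : IsClosed s) {f : ℝ → E}
    (hf : ContinuousOn f (Set.Icc 0 1)) (hfs : ∀ t ∈ Set.Icc (0 : ℝ) 1, f t ∈ s) :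
    ∫ t in (0 : ℝ)..1, f t ∈ s := by
  have : IsProbabilityMeasure (volume.restrict (Set.Ioc (0 : ℝ) 1)) :=
    ⟨by simp⟩
  rw [intervalIntegral.integral_of_le zero_le_one]
  refine hs.integral_mem hsc ?_ ?_
  · exact (ae_restrict_iff' measurableSet_Ioc).2
      (Filter.Eventually.of_forall fun t ht => hfs t (Set.Ioc_subset_Icc_self ht))
  · exact hf.integrableOn_Icc.mono_set Set.Ioc_subset_Icc_self

lemma fderiv_apply_eq_jac_mulVec (F : (Fin n → ℂ) → Fin n → ℂ) (z v : Fin n → ℂ) (i : Fin n) :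
    fderiv ℂ (fun w => F w i) z v = (jac F z *ᵥ v) i := by
  conv_lhs => rw [← Finset.univ_sum_single v]
  refine (map_sum _ _ _).trans (Finset.sum_congr rfl fun j _ => ?_)
  have hsingle : Pi.single j (v j) = v j • Pi.single j (1 : ℂ) := by
    rw [← Pi.single_smul', smul_eq_mul, mul_one]
  rw [hsingle, map_smul, smul_eq_mul, mul_comm]
  rfl

lemma continuous_jac_apply {F : (Fin n → ℂ) → Fin n → ℂ} (hF : ∀ i, ContDiff ℂ 1 fun z => F z i)
    (i j : Fin n) : Continuous fun z => jac F z i j :=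
  ((hF i).continuous_fderiv one_ne_zero).clm_apply continuous_const

lemma sub_eq_intervalIntegral_jac_mulVec {F : (Fin n → ℂ) → Fin n → ℂ}
    (hF : ∀ i, ContDiff ℂ 1 fun z => F z i) (x w : Fin n → ℂ) :
    F w - F x = (fun i j => ∫ t in (0 : ℝ)..1, jac F (x + (t : ℂ) • (w - x)) i j) *ᵥ (w - x) := by
  funext i
  have hint (j : Fin n) : IntervalIntegrable (fun t : ℝ => jac F (x + (t : ℂ) • (w - x)) i j)
      volume 0 1 :=
    ((continuous_jac_apply hF i j).comp (by fun_prop)).intervalIntegrable 0 1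
  rw [Pi.sub_apply, sub_eq_intervalIntegral_fderiv (hF i)]
  simp_rw [fderiv_apply_eq_jac_mulVec, mulVec, dotProduct]
  rw [intervalIntegral.integral_finsetSum fun j _ => (hint j).mul_const _]
  simp_rw [intervalIntegral.integral_mul_const]

lemma exists_mem_sub_eq_mulVec {F : (Fin n → ℂ) → Fin n → ℂ}
    (hF : ∀ i, ContDiff ℂ 1 fun z => F z i) {s : Set (Fin n → ℂ)} (hs : Convex ℝ s)
    {MJ : Fin n → Fin n → Set ℂ} (hMJc : ∀ i j, Convex ℝ (MJ i j))
    (hMJcl : ∀ i j, IsClosed (MJ i j)) (hMJ : ∀ z ∈ s, ∀ i j, jac F z i j ∈ MJ i j)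
    {x w : Fin n → ℂ} (hx : x ∈ s) (hw : w ∈ s) :
    ∃ A : Matrix (Fin n) (Fin n) ℂ, (∀ i j, A i j ∈ MJ i j) ∧ F w - F x = A *ᵥ (w - x) := by
  refine ⟨_, fun i j => ?_, sub_eq_intervalIntegral_jac_mulVec hF x w⟩
  refine intervalIntegral_mem_of_convex (hMJc i j) (hMJcl i j)
    ((continuous_jac_apply hF i j).comp (by fun_prop)).continuousOn fun t ht => hMJ _ ?_ i j
  rw [Complex.coe_smul]
  exact hs.add_smul_sub_mem hx hw ht

lemma mem_Kset_of_apply_eq_zero {F : (Fin n → ℂ) → Fin n → ℂ} {IV : Fin n → Set ℂ}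
    {x z : Fin n → ℂ} (hz : z ∈ boxSet IV) {Y : Matrix (Fin n) (Fin n) ℂ}
    {FX : Fin n → Set ℂ} (hFX : ∀ j, F x j ∈ FX j) {MJ : Fin n → Fin n → Set ℂ}
    {A : Matrix (Fin n) (Fin n) ℂ} (hA : ∀ i j, A i j ∈ MJ i j)
    (hmv : F z - F x = A *ᵥ (z - x)) (hzero : F z = 0) (i : Fin n) :
    z i ∈ Kset x Y FX MJ IV i := by
  have hfix : z = x - Y *ᵥ F x + (1 - Y * A) *ᵥ (z - x) := by
    rw [sub_mulVec, one_mulVec, ← mulVec_mulVec, ← hmv, hzero, zero_sub, mulVec_neg]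
    abel
  have hcomm : ((1 - Y * A) *ᵥ (z - x)) i = ∑ j, (z j - x j) * (1 - Y * A) i j :=
    show ∑ j, (1 - Y * A) i j * (z - x) j = _ from Finset.sum_congr rfl fun j _ => mul_comm _ _
  rw [hfix, Pi.add_apply, Pi.sub_apply, hcomm]
  exact Set.add_mem_add
    (Set.sub_mem_sub rfl (Set.finsetSum_mem_finsetSum _ _ _ fun j _ => mem_cmul rfl (hFX j)))
    (Set.finsetSum_mem_finsetSum _ _ _ fun j _ =>
      mem_cmul (Set.sub_mem_sub (hz j) rfl) (one_sub_mul_mem_Bmat Y hA i j))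

lemma IsPolyMap.contDiff {F : (Fin n → ℂ) → Fin n → ℂ} (hF : IsPolyMap F) (i : Fin n)
    {k : WithTop ℕ∞} : ContDiff ℂ k fun z => F z i := by
  obtain ⟨p, hp⟩ := hF i
  simpa only [hp] using (AnalyticOnNhd.eval_mvPolynomial p).contDiff

lemma IsRealPolyMap.isPolyMap {F : (Fin n → ℂ) → Fin n → ℂ} (hF : IsRealPolyMap F) :
    IsPolyMap F :=
  fun i => let ⟨_, hp⟩ := hF i; ⟨_, hp⟩

open MvPolynomial in
lemma IsRealPolyMap.apply_star {F : (Fin n → ℂ) → Fin n → ℂ} (hF : IsRealPolyMap F)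
    (z : Fin n → ℂ) : F (star z) = star (F z) := by
  funext i
  obtain ⟨p, hp⟩ := hF i
  rw [Pi.star_apply, hp, hp, eval_map, eval_map]
  have hreal : (starRingEnd ℂ).comp (algebraMap ℝ ℂ) = algebraMap ℝ ℂ :=
    RingHom.ext Complex.conj_ofReal
  rw [← starRingEnd_apply (eval₂ _ z p), eval₂_comp_left, hreal]
  rfl

lemma convex_boxSet {IV : Fin n → Set ℂ} (hIV : ∀ j, Convex ℝ (IV j)) :
    Convex ℝ (boxSet IV) := by
  rw [show boxSet IV = Set.univ.pi IV by ext; simp [boxSet]]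
  exact convex_pi fun j _ => hIV j

theorem certify_reality_general (F : (Fin n → ℂ) → Fin n → ℂ) (hF : IsRealPolyMap F)
    (IV : Fin n → Set ℂ) (hIV : ∀ j, IsRect (IV j))
    (x : Fin n → ℂ) (hx : x ∈ boxSet IV)
    (Y : Matrix (Fin n) (Fin n) ℂ)
    (FX : Fin n → Set ℂ) (hFX : ∀ j, F x j ∈ FX j)
    (MJ : Fin n → Fin n → Set ℂ) (hMJr : ∀ i j, IsRect (MJ i j))
    (hMJ : ∀ z ∈ boxSet IV, ∀ i j, jac F z i j ∈ MJ i j)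
    (hnorm : Real.sqrt 2 * imatNorm (Bmat Y MJ) < 1)
    (hconj : ∀ i, (fun w : ℂ => (starRingEnd ℂ) w) '' Kset x Y FX MJ IV i ⊆ IV i) :
    ∀ z ∈ boxSet IV, F z = 0 → ∀ j, (z j).im = 0 := by
  intro z hz hzero
  have mean_value {w w' : Fin n → ℂ} (hw : w ∈ boxSet IV) (hw' : w' ∈ boxSet IV) :=
    exists_mem_sub_eq_mulVec (fun i => hF.isPolyMap.contDiff i)
      (convex_boxSet fun j => (hIV j).convex) (fun i j => (hMJr i j).convex)
      (fun i j => (hMJr i j).isCompact.isClosed) hMJ hw hw'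
  obtain ⟨A, hA, hmv⟩ := mean_value hx hz
  have hz_star : star z ∈ boxSet IV := fun i =>
    hconj i ⟨z i, mem_Kset_of_apply_eq_zero hz hFX hA hmv hzero i, rfl⟩
  have hzero_star : F (star z) = 0 := by rw [hF.apply_star, hzero, star_zero]
  obtain ⟨A', hA', hmv'⟩ := mean_value hz hz_star
  have hB : imatNorm (Bmat Y MJ) < 1 := by
    by_contra! h
    exact hnorm.not_ge (one_le_mul_of_one_le_of_one_le (Real.one_le_sqrt.2 one_le_two) h)
  have hsub : star z - z = 0 :=
    eq_zero_of_mulVec_eq_zero_of_imatNorm_Bmat_lt_one (fun i j => (hMJr i j).isCompact.isBounded)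
      hB hA' (by rw [← hmv', hzero_star, hzero, sub_zero])
  exact fun j => Complex.conj_eq_iff_im.1 (congrFun (sub_eq_zero.1 hsub) j)

theorem certify_reality (F : (Fin n → ℂ) → Fin n → ℂ) (hF : IsRealPolyMap F)
    (IV : Fin n → Set ℂ) (hIV : ∀ j, IsRect (IV j))
    (x : Fin n → ℂ) (hx : x ∈ boxSet IV)
    (Y : Matrix (Fin n) (Fin n) ℂ) (hY : IsUnit Y)
    (FX : Fin n → Set ℂ) (hFXr : ∀ j, IsRect (FX j)) (hFX : ∀ j, F x j ∈ FX j)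
    (MJ : Fin n → Fin n → Set ℂ) (hMJr : ∀ i j, IsRect (MJ i j))
    (hMJ : ∀ z ∈ boxSet IV, ∀ i j, jac F z i j ∈ MJ i j)
    (hK : ∀ i, Kset x Y FX MJ IV i ⊆ IV i)
    (hnorm : Real.sqrt 2 * imatNorm (Bmat Y MJ) < 1)
    (hconj : ∀ i, (fun w : ℂ => (starRingEnd ℂ) w) '' Kset x Y FX MJ IV i ⊆ IV i) :
    ∀ z ∈ boxSet IV, F z = 0 → ∀ j, (z j).im = 0 :=
  certify_reality_general F hF IV hIV x hx Y FX hFX MJ hMJr hMJ hnorm hconj
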